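/- Let G ∈ C¹((0,∞)) ∩ C([0,∞)) with G > 0 on (0,∞) and G(0) ≥ 0, and suppose there exist real numbers θ_* ≤ θ^* with θ_* ≤ G'(t)/(2·G(t)^{3/2}) ≤ θ^* for every t > 0. For x ∈ ℝ set D₊(x) = (−x + √(x²+4))/2 and D₋(x) = (−x − √(x²+4))/2. For constants C > 0 and D ∈ ℝ define g(t) = 1 + C·(exp(D·∫₀^t √(G(s)) ds) − 1) on [0,∞). Fix λ ∈ ℝ. Then: (1) if C ≥ 1, C·D·√(G(0)) ≥ λ, and D ∈ (−∞, D₋(θ^*)] ∪ [D₊(θ_*), ∞), then g''(t) − G(t)·g(t) ≥ 0 for every t > 0, g(0) = 1 and g'(0⁺) ≥ λ; (2) if C ∈ (0,1], C·D·√(G(0)) ≤ λ, and D ∈ [D₋(θ_*), D₊(θ^*)], then g''(t) − G(t)·g(t) ≤ 0 for every t > 0, g(0) = 1 and g'(0⁺) ≤ λ. -/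
import Mathlib
open Set

lemma quad_ge (a D : ℝ) (h : 2*D ≤ -a - Real.sqrt (a^2+4) ∨ -a + Real.sqrt (a^2+4) ≤ 2*D) :
    0 ≤ D^2 + a*D - 1 := by
  have hs : Real.sqrt (a^2+4) ^ 2 = a^2+4 := Real.sq_sqrt (by positivity)
  have hn : 0 ≤ Real.sqrt (a^2+4) := Real.sqrt_nonneg _
  rcases h with h | h
  · nlinarith [sq_nonneg (2*D + a + Real.sqrt (a^2+4))]
  · nlinarith [sq_nonneg (2*D + a - Real.sqrt (a^2+4))]

lemma quad_le (a D : ℝ) (h1 : -a - Real.sqrt (a^2+4) ≤ 2*D) (h2 : 2*D ≤ -a + Real.sqrt (a^2+4)) :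
    D^2 + a*D - 1 ≤ 0 := by
  have hs : Real.sqrt (a^2+4) ^ 2 = a^2+4 := Real.sq_sqrt (by positivity)
  nlinarith [mul_nonneg (by linarith : (0:ℝ) ≤ 2*D + a + Real.sqrt (a^2+4))
    (by linarith : (0:ℝ) ≤ -a + Real.sqrt (a^2+4) - 2*D)]

lemma sqrt_gt_abs (a : ℝ) : |a| < Real.sqrt (a^2+4) := by
  have : Real.sqrt (a^2) < Real.sqrt (a^2+4) := Real.sqrt_lt_sqrt (by positivity) (by linarith)
  rwa [Real.sqrt_sq_eq_abs] at this

set_option maxHeartbeats 1000000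

/-- Lemma A.5 (Appendix): explicit super- and sub-solutions of the Jacobi-type
equation `g'' − G g = 0` on `(0,∞)` of the form
`g = 1 + C (exp(D ∫₀ᵗ √G) − 1)`, with prescribed initial value `g(0) = 1` and
one-sided bound on `g'(0⁺)`. -/
theorem stmt_19
    (G G' : ℝ → ℝ)
    (hGc : ContinuousOn G (Ici 0))
    (hGd : ∀ t : ℝ, 0 < t → HasDerivAt G (G' t) t)
    (hG'c : ContinuousOn G' (Ioi 0))
    (hGpos : ∀ t : ℝ, 0 < t → 0 < G t)
    (hG0 : 0 ≤ G 0)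
    (θs θS : ℝ) (hθ : θs ≤ θS)
    (hbound : ∀ t : ℝ, 0 < t →
      θs ≤ G' t / (2 * G t ^ ((3:ℝ)/2)) ∧ G' t / (2 * G t ^ ((3:ℝ)/2)) ≤ θS)
    (Dp Dm : ℝ → ℝ)
    (hDp : ∀ x, Dp x = (-x + Real.sqrt (x ^ 2 + 4)) / 2)
    (hDm : ∀ x, Dm x = (-x - Real.sqrt (x ^ 2 + 4)) / 2)
    (C D : ℝ) (hCpos : 0 < C)
    (g : ℝ → ℝ)
    (hg : ∀ t, g t = 1 + C * (Real.exp (D * ∫ s in (0:ℝ)..t, Real.sqrt (G s)) - 1))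
    (lam : ℝ) :
    ((1 ≤ C ∧ lam ≤ C * D * Real.sqrt (G 0) ∧ (D ≤ Dm θS ∨ Dp θs ≤ D)) →
      (∀ t : ℝ, 0 < t → 0 ≤ deriv (deriv g) t - G t * g t) ∧
      g 0 = 1 ∧ lam ≤ derivWithin g (Ici 0) 0) ∧
    ((C ≤ 1 ∧ C * D * Real.sqrt (G 0) ≤ lam ∧ D ∈ Icc (Dm θs) (Dp θS)) →
      (∀ t : ℝ, 0 < t → deriv (deriv g) t - G t * g t ≤ 0) ∧
      g 0 = 1 ∧ derivWithin g (Ici 0) 0 ≤ lam) := by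
  -- setup
  set f : ℝ → ℝ := fun s => Real.sqrt (G s) with hf
  set F : ℝ → ℝ := fun t => ∫ s in (0:ℝ)..t, f s with hF
  have hfc : ContinuousOn f (Ici 0) := hGc.sqrt
  -- F has derivative f t at any t > 0
  have hFd : ∀ t : ℝ, 0 < t → HasDerivAt F (f t) t := by
    intro t ht
    have hsub : uIcc (0:ℝ) t ⊆ Ici 0 := by
      rw [uIcc_of_le ht.le]; exact Icc_subset_Ici_self
    have hint : IntervalIntegrable f MeasureTheory.volume 0 t :=
      (hfc.mono hsub).intervalIntegrable
    have hca : ContinuousAt f t :=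
      (hfc.continuousAt (Ici_mem_nhds ht))
    exact intervalIntegral.integral_hasDerivAt_right hint
      ((hfc.mono Ioi_subset_Ici_self).stronglyMeasurableAtFilter isOpen_Ioi t ht) hca
  -- g has derivative C * D * f t * exp (D * F t) at any t > 0
  have hgd : ∀ t : ℝ, 0 < t →
      HasDerivAt g (C * (Real.exp (D * F t) * (D * f t))) t := by
    intro t ht
    have h1 : HasDerivAt (fun u => D * F u) (D * f t) t := (hFd t ht).const_mul D
    have h2 : HasDerivAt (fun u => Real.exp (D * F u))
        (Real.exp (D * F t) * (D * f t)) t := h1.exp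
    have h3 : HasDerivAt (fun u => 1 + C * (Real.exp (D * F u) - 1))
        (C * (Real.exp (D * F t) * (D * f t))) t := by
      simpa using ((h2.sub_const 1).const_mul C).const_add 1
    exact h3.congr_of_eventuallyEq (Filter.Eventually.of_forall fun u => (hg u))
  -- deriv g agrees with explicit function near any t > 0
  have hderiv_g : ∀ t ∈ Ioi (0:ℝ), deriv g t = C * (Real.exp (D * F t) * (D * f t)) :=
    fun t ht => (hgd t ht).deriv
  -- second derivative
  have hsnd : ∀ t : ℝ, 0 < t →
      deriv (deriv g) t
        = C * D * Real.exp (D * F t) * (G' t / (2 * f t) + D * G t) := by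
    intro t ht
    have heq : deriv g =ᶠ[nhds t] fun u => C * (Real.exp (D * F u) * (D * f u)) :=
      Filter.eventuallyEq_of_mem (Ioi_mem_nhds ht) hderiv_g
    rw [heq.deriv_eq]
    have hGt : G t ≠ 0 := (hGpos t ht).ne'
    have hsq : HasDerivAt (fun u => f u) (G' t / (2 * Real.sqrt (G t))) t :=
      (hGd t ht).sqrt hGt
    have hE : HasDerivAt (fun u => Real.exp (D * F u)) (Real.exp (D * F t) * (D * f t)) t :=
      (((hFd t ht).const_mul D).exp)
    have hprod : HasDerivAt (fun u => Real.exp (D * F u) * (D * f u))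
        (Real.exp (D * F t) * (D * f t) * (D * f t)
          + Real.exp (D * F t) * (D * (G' t / (2 * Real.sqrt (G t))))) t :=
      hE.mul (hsq.const_mul D)
    rw [(hprod.const_mul C).deriv]
    have hGt' : 0 < G t := hGpos t ht
    simp only [hf]
    set r := Real.sqrt (G t) with hr
    have hft : r * r = G t := Real.mul_self_sqrt hGt'.le
    have hrne : r ≠ 0 := by positivity
    rw [← hft]
    field_simp
    ring
  -- key identity : deriv (deriv g) t - G t * g t
  have hkey : ∀ t : ℝ, 0 < t →
      deriv (deriv g) t - G t * g t
        = G t * (C * Real.exp (D * F t) *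
            (D^2 + (G' t / (2 * G t ^ ((3:ℝ)/2))) * D - 1) + (C - 1)) := by
    intro t ht
    rw [hsnd t ht, hg t]
    have hGt : 0 < G t := hGpos t ht
    have hfpos : 0 < f t := Real.sqrt_pos.mpr hGt
    have hft : f t * f t = G t := Real.mul_self_sqrt hGt.le
    have h32 : G t ^ ((3:ℝ)/2) = G t * f t := by
      rw [show ((3:ℝ)/2) = 1 + 1/2 by norm_num, Real.rpow_add hGt, Real.rpow_one]
      simp [hf, Real.sqrt_eq_rpow]
    rw [h32]
    simp only [hf]
    set r := Real.sqrt (G t) with hr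
    have hrne : r ≠ 0 := by positivity
    rw [← hft]
    field_simp
    ring
  -- g 0 = 1
  have hg0 : g 0 = 1 := by simp [hg 0]
  -- derivWithin at 0
  have hF0 : HasDerivWithinAt F (f 0) (Ici 0) 0 := by
    have hca : ContinuousWithinAt f (Ioi 0) 0 :=
      (hfc.continuousWithinAt self_mem_Ici).mono Ioi_subset_Ici_self
    exact intervalIntegral.integral_hasDerivWithinAt_right
      (by simp : IntervalIntegrable f MeasureTheory.volume 0 0)
      ((hfc.mono Ioi_subset_Ici_self).stronglyMeasurableAtFilter_nhdsWithin
        measurableSet_Ioi 0) hca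
  have hgd0 : HasDerivWithinAt g (C * D * Real.sqrt (G 0)) (Ici 0) 0 := by
    have h2 : HasDerivWithinAt (fun u => 1 + C * (Real.exp (D * F u) - 1))
        (C * (Real.exp (D * F 0) * (D * f 0))) (Ici 0) 0 := by
      simpa using ((((hF0.const_mul D).exp).sub_const 1).const_mul C).const_add 1
    have h3 : HasDerivWithinAt g (C * (Real.exp (D * F 0) * (D * f 0))) (Ici 0) 0 :=
      h2.congr_of_mem (fun u _ => hg u) self_mem_Ici
    have hF00 : F 0 = 0 := by simp [hF]
    have hval : C * (Real.exp (D * F 0) * (D * f 0)) = C * D * Real.sqrt (G 0) := by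
      rw [hF00]; simp [hf]; ring
    rwa [hval] at h3
  have hdw : derivWithin g (Ici 0) 0 = C * D * Real.sqrt (G 0) :=
    hgd0.derivWithin (uniqueDiffOn_Ici 0 0 self_mem_Ici)
  constructor
  · rintro ⟨hC1, hlam, hD⟩
    refine ⟨fun t ht => ?_, hg0, by rw [hdw]; exact hlam⟩
    rw [hkey t ht]
    set θ := G' t / (2 * G t ^ ((3:ℝ)/2)) with hθt
    obtain ⟨hb1, hb2⟩ := hbound t ht
    have hquad : 0 ≤ D^2 + θ * D - 1 := by
      rcases hD with hD | hD
      · rw [hDm θS] at hD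
        have habs := sqrt_gt_abs θS
        have hDneg : D < 0 := by
          rcases abs_cases θS with ⟨h, _⟩ | ⟨h, _⟩ <;> nlinarith
        have : 0 ≤ D^2 + θS * D - 1 := quad_ge θS D (Or.inl (by linarith))
        nlinarith
      · rw [hDp θs] at hD
        have habs := sqrt_gt_abs θs
        have hDpos : 0 < D := by
          rcases abs_cases θs with ⟨h, _⟩ | ⟨h, _⟩ <;> nlinarith
        have : 0 ≤ D^2 + θs * D - 1 := quad_ge θs D (Or.inr (by linarith))
        nlinarith
    have hE := Real.exp_pos (D * F t)
    have hGt := hGpos t ht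
    nlinarith [mul_nonneg (mul_pos hCpos hE).le hquad]
  · rintro ⟨hC1, hlam, hD1, hD2⟩
    refine ⟨fun t ht => ?_, hg0, by rw [hdw]; exact hlam⟩
    rw [hkey t ht]
    set θ := G' t / (2 * G t ^ ((3:ℝ)/2)) with hθt
    obtain ⟨hb1, hb2⟩ := hbound t ht
    rw [hDm θs] at hD1; rw [hDp θS] at hD2
    have hquad : D^2 + θ * D - 1 ≤ 0 := by
      rcases le_or_gt 0 D with hDpos | hDneg
      · have habsS := sqrt_gt_abs θS
        have habss := sqrt_gt_abs θs
        have h1 : -θS - Real.sqrt (θS^2+4) ≤ 2*D := by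
          rcases abs_cases θS with ⟨h, _⟩ | ⟨h, _⟩ <;> nlinarith
        have : D^2 + θS * D - 1 ≤ 0 := quad_le θS D h1 (by linarith)
        nlinarith
      · have habss := sqrt_gt_abs θs
        have h2 : 2*D ≤ -θs + Real.sqrt (θs^2+4) := by
          rcases abs_cases θs with ⟨h, _⟩ | ⟨h, _⟩ <;> nlinarith
        have : D^2 + θs * D - 1 ≤ 0 := quad_le θs D (by linarith) h2
        nlinarith
    have hE := Real.exp_pos (D * F t)
    have hGt := hGpos t ht
    nlinarith [mul_nonneg (mul_pos hCpos hE).le (neg_nonneg.mpr hquad)]
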